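/- Let α > −1/2 be real. For z ∈ ℂ∖(−∞,0] define, with principal branches of all fractional powers, w(z) = ((z+1)^{1/2}+1)/((z+1)^{1/2}−1) and the 2×2 matrix P^{(∞)}_α(z) = E · diag((z+1)^{−1/4}, (z+1)^{1/4}) · V · diag(w(z)^{−α}, w(z)^{α}), where E = [[1,0],[2αi,1]] and V = (1/√2)[[1,i],[i,1]]. Then for every x ∈ (−1,0) the one-sided limits P_{±}(x) = lim_{ε→0+} P^{(∞)}_α(x ± iε) exist and satisfy P_{+}(x) = P_{−}(x) · diag(e^{2απi}, e^{−2απi}); and for every x ∈ (−∞,−1) the one-sided limits exist and satisfy P_{+}(x) = P_{−}(x) · [[0,1],[−1,0]]. -/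

import Mathlib

/-!
Both jumps come from the boundary behaviour of principal powers at the negative real axis:
approached from above, `ζ ^ c` tends to its principal value, approached from below to that value
times `e^{-2πic}`.

On `(-1, 0)` the point `z + 1` stays in the slit plane, so `(z+1)^{∓1/4}` is continuous there,
while `w` exchanges the two half-planes and has a negative boundary value; hence `w^{∓α}` jumps by
`e^{±2απi}`. On `(-∞, -1)` the square root `(z+1)^{1/2}` changes sign across the axis, so the two
boundary values of `w` are reciprocal and `w^{-α}`, `w^{α}` trade places, while `(z+1)^{∓1/4}`
pick up factors `±i`, which `V` turns into the permutation `[[0,1],[-1,0]]`.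
-/

open Complex Matrix Filter Topology

/-- `V = (1/√2)[[1, i], [i, 1]]`. -/
noncomputable def Vmat : Matrix (Fin 2) (Fin 2) ℂ :=
  ((Real.sqrt 2 : ℂ))⁻¹ • !![1, I; I, 1]

/-- `w(z) = ((z+1)^{1/2}+1)/((z+1)^{1/2}−1)`, principal branch. -/
noncomputable def wFun (z : ℂ) : ℂ :=
  ((z + 1) ^ ((1 : ℂ) / 2) + 1) / ((z + 1) ^ ((1 : ℂ) / 2) - 1)

/-- The global parametrix
`P^{(∞)}_α(z) = E · diag((z+1)^{−1/4}, (z+1)^{1/4}) · V · diag(w(z)^{−α}, w(z)^{α})`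
with `E = [[1,0],[2αi,1]]`, principal branches. -/
noncomputable def Pinf (α : ℝ) (z : ℂ) : Matrix (Fin 2) (Fin 2) ℂ :=
  !![1, 0; 2 * (α : ℂ) * I, 1] *
  !![(z + 1) ^ (-(1 : ℂ) / 4), 0; 0, (z + 1) ^ ((1 : ℂ) / 4)] *
  Vmat *
  !![wFun z ^ (-(α : ℂ)), 0; 0, wFun z ^ ((α : ℂ))]

open scoped Real

namespace Complex

variable {β : Type*} {l : Filter β} {f : β → ℂ}

lemma cpow_inv_two_im_pos {x : ℂ} (hx : 0 ≤ x.im) (hx' : x.re < ‖x‖) :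
    0 < (x ^ (2⁻¹ : ℂ)).im := by
  rw [cpow_inv_two_im_eq_sqrt hx]
  exact Real.sqrt_pos.2 (by linarith)

lemma cpow_inv_two_im_neg {x : ℂ} (hx : x.im < 0) : (x ^ (2⁻¹ : ℂ)).im < 0 := by
  have : x.re < ‖x‖ := (le_abs_self _).trans_lt (abs_re_lt_norm.2 hx.ne)
  rw [cpow_inv_two_im_eq_neg_sqrt hx, neg_lt_zero]
  exact Real.sqrt_pos.2 (by linarith)

lemma im_add_one_div_sub_one (s : ℂ) :
    ((s + 1) / (s - 1)).im = -2 * s.im / normSq (s - 1) := by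
  rw [div_im, div_sub_div_same]
  congr 1
  simp only [add_re, add_im, sub_re, sub_im, one_re, one_im]
  ring

lemma im_add_one_div_sub_one_neg {s : ℂ} (hs : 0 < s.im) : ((s + 1) / (s - 1)).im < 0 := by
  have hs1 : s - 1 ≠ 0 := fun h => by simp [sub_eq_zero.1 h] at hs
  rw [im_add_one_div_sub_one]
  exact div_neg_of_neg_of_pos (by linarith) (normSq_pos.2 hs1)

lemma im_add_one_div_sub_one_pos {s : ℂ} (hs : s.im < 0) : 0 < ((s + 1) / (s - 1)).im := by
  have hs1 : s - 1 ≠ 0 := fun h => by simp [sub_eq_zero.1 h] at hs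
  rw [im_add_one_div_sub_one]
  exact div_pos (by linarith) (normSq_pos.2 hs1)

lemma tendsto_cpow_const_of_tendsto_log {L : ℂ} (hf : ∀ᶠ t in l, f t ≠ 0)
    (hlog : Tendsto (fun t => log (f t)) l (𝓝 L)) (a : ℂ) :
    Tendsto (fun t => f t ^ a) l (𝓝 (exp (L * a))) :=
  ((continuous_exp.tendsto _).comp (hlog.mul_const a)).congr'
    (hf.mono fun _ ht => (cpow_def_of_ne_zero ht a).symm)

lemma tendsto_cpow_const_of_tendsto_nhdsWithin_im_nonneg {z : ℂ} (hre : z.re < 0)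
    (him : z.im = 0) (hf : Tendsto f l (𝓝[{w | 0 ≤ w.im}] z)) (a : ℂ) :
    Tendsto (fun t => f t ^ a) l (𝓝 (z ^ a)) := by
  have hz : z ≠ 0 := fun h => by simp [h] at hre
  rw [cpow_def_of_ne_zero hz]
  exact tendsto_cpow_const_of_tendsto_log
    ((hf.mono_right nhdsWithin_le_nhds).eventually_ne hz)
    ((continuousWithinAt_log_of_re_neg_of_im_zero hre him).tendsto.comp hf) a

lemma tendsto_cpow_const_of_tendsto_nhdsWithin_im_neg {z : ℂ} (hre : z.re < 0)
    (him : z.im = 0) (hf : Tendsto f l (𝓝[{w | w.im < 0}] z)) (a : ℂ) :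
    Tendsto (fun t => f t ^ a) l (𝓝 (z ^ a * exp (-(2 * π * I * a)))) := by
  have hz : z ≠ 0 := fun h => by simp [h] at hre
  have hlog : log z = Real.log ‖z‖ + π * I := by
    rw [log, arg_eq_pi_iff.2 ⟨hre, him⟩]
  have hlim : exp ((Real.log ‖z‖ - π * I) * a) = z ^ a * exp (-(2 * π * I * a)) := by
    rw [cpow_def_of_ne_zero hz, hlog, ← exp_add]
    ring_nf
  rw [← hlim]
  exact tendsto_cpow_const_of_tendsto_log
    ((hf.mono_right nhdsWithin_le_nhds).eventually_ne hz)
    ((tendsto_log_nhdsWithin_im_neg_of_re_neg_of_im_zero hre him).comp hf) a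

lemma tendsto_ofReal_add_mul_I (x : ℝ) :
    Tendsto (fun ε : ℝ => (x : ℂ) + ε * I) (𝓝[>] 0) (𝓝[{w | 0 < w.im}] (x : ℂ)) := by
  refine tendsto_nhdsWithin_iff.2
    ⟨?_, eventually_mem_nhdsWithin.mono fun ε hε => by simpa using hε⟩
  have : Continuous fun ε : ℝ => (x : ℂ) + ε * I := by fun_prop
  simpa using (this.tendsto 0).mono_left nhdsWithin_le_nhds

lemma tendsto_ofReal_sub_mul_I (x : ℝ) :
    Tendsto (fun ε : ℝ => (x : ℂ) - ε * I) (𝓝[>] 0) (𝓝[{w | w.im < 0}] (x : ℂ)) := by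
  refine tendsto_nhdsWithin_iff.2
    ⟨?_, eventually_mem_nhdsWithin.mono fun ε hε => by simpa using hε⟩
  have : Continuous fun ε : ℝ => (x : ℂ) - ε * I := by fun_prop
  simpa using (this.tendsto 0).mono_left nhdsWithin_le_nhds

lemma tendsto_add_one_nhdsWithin_im_pos (z : ℂ) :
    Tendsto (· + 1) (𝓝[{w : ℂ | 0 < w.im}] z) (𝓝[{w | 0 ≤ w.im}] (z + 1)) :=
  (continuous_add_const 1).continuousWithinAt.tendsto_nhdsWithin fun w hw => by
    simpa using le_of_lt hw

lemma tendsto_add_one_nhdsWithin_im_neg (z : ℂ) :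
    Tendsto (· + 1) (𝓝[{w : ℂ | w.im < 0}] z) (𝓝[{w | w.im < 0}] (z + 1)) :=
  (continuous_add_const 1).continuousWithinAt.tendsto_nhdsWithin fun w hw => by simpa using hw

end Complex

noncomputable def parametrixOf (α : ℝ) (d₁ d₂ w₁ w₂ : ℂ) : Matrix (Fin 2) (Fin 2) ℂ :=
  !![1, 0; 2 * (α : ℂ) * I, 1] * !![d₁, 0; 0, d₂] * Vmat * !![w₁, 0; 0, w₂]

lemma tendsto_diagonal_two {R β : Type*} [TopologicalSpace R] [Zero R] {l : Filter β}
    {f g : β → R} {a b : R}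
    (hf : Tendsto f l (𝓝 a)) (hg : Tendsto g l (𝓝 b)) :
    Tendsto (fun t => !![f t, 0; 0, g t]) l (𝓝 !![a, 0; 0, b]) := by
  refine tendsto_pi_nhds.2 fun i => tendsto_pi_nhds.2 fun j => ?_
  fin_cases i <;> fin_cases j
  exacts [hf, tendsto_const_nhds, tendsto_const_nhds, hg]

lemma tendsto_Pinf {α : ℝ} {l : Filter ℂ} {d₁ d₂ w₁ w₂ : ℂ}
    (hd₁ : Tendsto (fun z => (z + 1) ^ (-(1 : ℂ) / 4)) l (𝓝 d₁))
    (hd₂ : Tendsto (fun z => (z + 1) ^ ((1 : ℂ) / 4)) l (𝓝 d₂))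
    (hw₁ : Tendsto (fun z => wFun z ^ (-(α : ℂ))) l (𝓝 w₁))
    (hw₂ : Tendsto (fun z => wFun z ^ (α : ℂ)) l (𝓝 w₂)) :
    Tendsto (Pinf α) l (𝓝 (parametrixOf α d₁ d₂ w₁ w₂)) :=
  ((tendsto_const_nhds.mul (tendsto_diagonal_two hd₁ hd₂)).mul tendsto_const_nhds).mul
    (tendsto_diagonal_two hw₁ hw₂)

lemma parametrixOf_mul_diagonal (α : ℝ) (d₁ d₂ w₁ w₂ a b : ℂ) :
    parametrixOf α d₁ d₂ w₁ w₂ * !![a, 0; 0, b] = parametrixOf α d₁ d₂ (w₁ * a) (w₂ * b) := by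
  rw [parametrixOf, parametrixOf, Matrix.mul_assoc]
  congr 1
  ext i j
  fin_cases i <;> fin_cases j <;> simp

lemma parametrixOf_swap (α : ℝ) (d₁ d₂ w₁ w₂ : ℂ) :
    parametrixOf α d₁ d₂ w₁ w₂ = parametrixOf α (d₁ * I) (d₂ * -I) w₂ w₁ * !![0, 1; -1, 0] := by
  simp only [parametrixOf, Matrix.mul_assoc]
  congr 1
  ext i j
  fin_cases i <;> fin_cases j <;> simp [Vmat, Matrix.mul_apply, Fin.sum_univ_two] <;> ring_nf <;>
    simp

lemma wFun_eq (z : ℂ) :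
    wFun z = ((z + 1) ^ (2⁻¹ : ℂ) + 1) / ((z + 1) ^ (2⁻¹ : ℂ) - 1) := by
  rw [wFun, one_div]

lemma wFun_im_neg_of_im_pos {z : ℂ} (hz : 0 < z.im) : (wFun z).im < 0 := by
  have h : 0 < (z + 1).im := by simpa using hz
  rw [wFun_eq]
  exact im_add_one_div_sub_one_neg
    (cpow_inv_two_im_pos h.le ((le_abs_self _).trans_lt (abs_re_lt_norm.2 h.ne')))

lemma wFun_im_pos_of_im_neg {z : ℂ} (hz : z.im < 0) : 0 < (wFun z).im := by
  have h : (z + 1).im < 0 := by simpa using hz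
  rw [wFun_eq]
  exact im_add_one_div_sub_one_pos (cpow_inv_two_im_neg h)

lemma tendsto_wFun {l : Filter ℂ} {s : ℂ}
    (hs : Tendsto (fun z => (z + 1) ^ ((1 : ℂ) / 2)) l (𝓝 s)) (hs1 : s ≠ 1) :
    Tendsto wFun l (𝓝 ((s + 1) / (s - 1))) :=
  (hs.add tendsto_const_nhds).div (hs.sub tendsto_const_nhds) (sub_ne_zero.2 hs1)

lemma ofReal_add_one_cpow_one_div_two {x : ℝ} (hx : -1 ≤ x) :
    ((x : ℂ) + 1) ^ ((1 : ℂ) / 2) = (√(x + 1) : ℝ) := by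
  rw [Real.sqrt_eq_rpow, ofReal_cpow (by linarith)]
  push_cast
  rfl

lemma exists_tendsto_Pinf_jump_of_mem_Ioo (α : ℝ) {x : ℝ} (hx : x ∈ Set.Ioo (-1 : ℝ) 0) :
    ∃ Pp Pm : Matrix (Fin 2) (Fin 2) ℂ,
      Tendsto (Pinf α) (𝓝[{w | 0 < w.im}] (x : ℂ)) (𝓝 Pp) ∧
      Tendsto (Pinf α) (𝓝[{w | w.im < 0}] (x : ℂ)) (𝓝 Pm) ∧
      Pp = Pm * !![exp (2 * (α : ℂ) * (π : ℂ) * I), 0;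
                   0, exp (-(2 * (α : ℂ) * (π : ℂ) * I))] := by
  obtain ⟨hx₁, hx₀⟩ := hx
  set s : ℝ := √(x + 1)
  have hs₀ : 0 < s := Real.sqrt_pos.2 (by linarith)
  have hs₁ : s < 1 := (Real.sqrt_lt' one_pos).2 (by linarith)
  set r : ℝ := (s + 1) / (s - 1) with hr
  have hr₀ : r < 0 := div_neg_of_pos_of_neg (by linarith) (by linarith)
  have hslit : (x : ℂ) + 1 ∈ slitPlane := mem_slitPlane_iff.2 (Or.inl (by simp; linarith))
  have hd (c : ℂ) : Tendsto (fun z => (z + 1) ^ c) (𝓝 (x : ℂ)) (𝓝 (((x : ℂ) + 1) ^ c)) :=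
    (continuousAt_cpow_const hslit).tendsto.comp ((continuous_add_const 1).tendsto _)
  have hw : Tendsto wFun (𝓝 (x : ℂ)) (𝓝 (r : ℂ)) := by
    have h := hd ((1 : ℂ) / 2)
    rw [ofReal_add_one_cpow_one_div_two hx₁.le] at h
    simpa [hr] using tendsto_wFun h (by exact_mod_cast hs₁.ne)
  have hwUpper : Tendsto wFun (𝓝[{w | 0 < w.im}] (x : ℂ)) (𝓝[{w | w.im < 0}] (r : ℂ)) :=
    tendsto_nhdsWithin_iff.2 ⟨hw.mono_left nhdsWithin_le_nhds,
      eventually_mem_nhdsWithin.mono fun _ hz => wFun_im_neg_of_im_pos hz⟩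
  have hwLower : Tendsto wFun (𝓝[{w | w.im < 0}] (x : ℂ)) (𝓝[{w | 0 ≤ w.im}] (r : ℂ)) :=
    tendsto_nhdsWithin_iff.2 ⟨hw.mono_left nhdsWithin_le_nhds,
      eventually_mem_nhdsWithin.mono fun _ hz => (wFun_im_pos_of_im_neg hz).le⟩
  have hr_re : (r : ℂ).re < 0 := by simpa using hr₀
  refine ⟨_, _,
    tendsto_Pinf ((hd _).mono_left nhdsWithin_le_nhds) ((hd _).mono_left nhdsWithin_le_nhds)
      (tendsto_cpow_const_of_tendsto_nhdsWithin_im_neg hr_re (ofReal_im r) hwUpper _)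
      (tendsto_cpow_const_of_tendsto_nhdsWithin_im_neg hr_re (ofReal_im r) hwUpper _),
    tendsto_Pinf ((hd _).mono_left nhdsWithin_le_nhds) ((hd _).mono_left nhdsWithin_le_nhds)
      (tendsto_cpow_const_of_tendsto_nhdsWithin_im_nonneg hr_re (ofReal_im r) hwLower _)
      (tendsto_cpow_const_of_tendsto_nhdsWithin_im_nonneg hr_re (ofReal_im r) hwLower _), ?_⟩
  rw [parametrixOf_mul_diagonal]
  congr 2 <;> congr 2 <;> ring

lemma exists_tendsto_wFun_of_lt_neg_one {x : ℝ} (hx : x < -1) :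
    ∃ ω : ℂ, ω.im < 0 ∧ Tendsto wFun (𝓝[{w | 0 < w.im}] (x : ℂ)) (𝓝 ω) ∧
      Tendsto wFun (𝓝[{w | w.im < 0}] (x : ℂ)) (𝓝 ω⁻¹) := by
  set u : ℂ := (x : ℂ) + 1
  have hu_re : u.re < 0 := by simp [u]; linarith
  have hu_im : u.im = 0 := by simp [u]
  set s : ℂ := u ^ ((1 : ℂ) / 2) with hs
  have hs_im : 0 < s.im := by
    rw [hs, one_div]
    exact cpow_inv_two_im_pos hu_im.ge (hu_re.trans_le (norm_nonneg _))
  have hsLower : s * exp (-(2 * π * I * (1 / 2))) = -s := by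
    rw [show -(2 * π * I * (1 / 2)) = -(π * I) by ring, exp_neg, exp_pi_mul_I]
    ring
  refine ⟨(s + 1) / (s - 1), im_add_one_div_sub_one_neg hs_im,
    tendsto_wFun (tendsto_cpow_const_of_tendsto_nhdsWithin_im_nonneg hu_re hu_im
      (tendsto_add_one_nhdsWithin_im_pos _) _) fun h => by simp [h] at hs_im, ?_⟩
  have hw := tendsto_wFun (hsLower ▸ tendsto_cpow_const_of_tendsto_nhdsWithin_im_neg hu_re hu_im
    (tendsto_add_one_nhdsWithin_im_neg _) ((1 : ℂ) / 2)) fun h => by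
      simp [neg_eq_iff_eq_neg.1 h] at hs_im
  rwa [show (-s + 1) / (-s - 1) = ((s + 1) / (s - 1))⁻¹ by
    rw [inv_div, ← neg_div_neg_eq]; ring_nf] at hw

lemma exists_tendsto_Pinf_jump_of_lt_neg_one (α : ℝ) {x : ℝ} (hx : x < -1) :
    ∃ Pp Pm : Matrix (Fin 2) (Fin 2) ℂ,
      Tendsto (Pinf α) (𝓝[{w | 0 < w.im}] (x : ℂ)) (𝓝 Pp) ∧
      Tendsto (Pinf α) (𝓝[{w | w.im < 0}] (x : ℂ)) (𝓝 Pm) ∧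
      Pp = Pm * !![0, 1; -1, 0] := by
  have hu_re : ((x : ℂ) + 1).re < 0 := by simp; linarith
  have hu_im : ((x : ℂ) + 1).im = 0 := by simp
  obtain ⟨ω, hω_im, hwUpper, hwLower⟩ := exists_tendsto_wFun_of_lt_neg_one hx
  have hω₀ : ω ≠ 0 := fun h => by simp [h] at hω_im
  have hω_arg : ω.arg ≠ π := fun h => hω_im.ne (arg_eq_pi_iff.1 h).2
  have hωUpper (a : ℂ) :
      Tendsto (fun z => wFun z ^ a) (𝓝[{w | 0 < w.im}] (x : ℂ)) (𝓝 (ω ^ a)) :=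
    (continuousAt_cpow_const (mem_slitPlane_iff.2 (Or.inr hω_im.ne))).tendsto.comp hwUpper
  have hωLower (a : ℂ) :
      Tendsto (fun z => wFun z ^ a) (𝓝[{w | w.im < 0}] (x : ℂ)) (𝓝 (ω ^ (-a))) := by
    have hslit : ω⁻¹ ∈ slitPlane := mem_slitPlane_iff.2 (Or.inr (by simp [hω₀, hω_im.ne]))
    simpa only [Function.comp_def, inv_cpow _ _ hω_arg, ← cpow_neg] using
      (continuousAt_cpow_const hslit).tendsto.comp hwLower
  have hdUpper (c : ℂ) : Tendsto (fun z => (z + 1) ^ c) (𝓝[{w | 0 < w.im}] (x : ℂ))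
      (𝓝 (((x : ℂ) + 1) ^ c)) :=
    tendsto_cpow_const_of_tendsto_nhdsWithin_im_nonneg hu_re hu_im
      (tendsto_add_one_nhdsWithin_im_pos (x : ℂ)) c
  have hdLower (c : ℂ) : Tendsto (fun z => (z + 1) ^ c) (𝓝[{w | w.im < 0}] (x : ℂ))
      (𝓝 (((x : ℂ) + 1) ^ c * exp (-(2 * π * I * c)))) :=
    tendsto_cpow_const_of_tendsto_nhdsWithin_im_neg hu_re hu_im
      (tendsto_add_one_nhdsWithin_im_neg (x : ℂ)) c
  refine ⟨_, _,
    tendsto_Pinf (hdUpper _) (hdUpper _) (hωUpper _) (hωUpper _),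
    tendsto_Pinf (hdLower _) (hdLower _) (hωLower _) (hωLower _), ?_⟩
  have hI : exp (-(2 * π * I * (-1 / 4))) = I := by
    rw [show -(2 * π * I * (-1 / 4)) = π / 2 * I by ring, exp_pi_div_two_mul_I]
  have hnegI : exp (-(2 * π * I * (1 / 4))) = -I := by
    rw [show -(2 * π * I * (1 / 4)) = -π / 2 * I by ring, exp_neg_pi_div_two_mul_I]
  rw [parametrixOf_swap, hI, hnegI, neg_neg]

theorem stmt9_general (α : ℝ) :
    (∀ x : ℝ, x ∈ Set.Ioo (-1 : ℝ) 0 →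
      ∃ Pp Pm : Matrix (Fin 2) (Fin 2) ℂ,
        Tendsto (fun ε : ℝ => Pinf α ((x : ℂ) + (ε : ℂ) * I))
          (𝓝[>] 0) (𝓝 Pp) ∧
        Tendsto (fun ε : ℝ => Pinf α ((x : ℂ) - (ε : ℂ) * I))
          (𝓝[>] 0) (𝓝 Pm) ∧
        Pp = Pm * !![Complex.exp (2 * (α : ℂ) * (Real.pi : ℂ) * I), 0;
                     0, Complex.exp (-(2 * (α : ℂ) * (Real.pi : ℂ) * I))]) ∧
    (∀ x : ℝ, x < -1 →
      ∃ Pp Pm : Matrix (Fin 2) (Fin 2) ℂ,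
        Tendsto (fun ε : ℝ => Pinf α ((x : ℂ) + (ε : ℂ) * I))
          (𝓝[>] 0) (𝓝 Pp) ∧
        Tendsto (fun ε : ℝ => Pinf α ((x : ℂ) - (ε : ℂ) * I))
          (𝓝[>] 0) (𝓝 Pm) ∧
        Pp = Pm * !![0, 1; -1, 0]) := by
  constructor
  · intro x hx
    obtain ⟨Pp, Pm, hPp, hPm, hjump⟩ := exists_tendsto_Pinf_jump_of_mem_Ioo α hx
    exact ⟨Pp, Pm, hPp.comp (tendsto_ofReal_add_mul_I x),
      hPm.comp (tendsto_ofReal_sub_mul_I x), hjump⟩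
  · intro x hx
    obtain ⟨Pp, Pm, hPp, hPm, hjump⟩ := exists_tendsto_Pinf_jump_of_lt_neg_one α hx
    exact ⟨Pp, Pm, hPp.comp (tendsto_ofReal_add_mul_I x),
      hPm.comp (tendsto_ofReal_sub_mul_I x), hjump⟩

/-- `P^{(∞)}_α` has boundary values on `(−1, 0)` and `(−∞, −1)` from above and below,
with jumps `diag(e^{2απi}, e^{−2απi})` and `[[0,1],[−1,0]]` respectively. -/
theorem stmt9 (α : ℝ) (hα : -1 / 2 < α) :
    (∀ x : ℝ, x ∈ Set.Ioo (-1 : ℝ) 0 →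
      ∃ Pp Pm : Matrix (Fin 2) (Fin 2) ℂ,
        Tendsto (fun ε : ℝ => Pinf α ((x : ℂ) + (ε : ℂ) * I))
          (𝓝[>] 0) (𝓝 Pp) ∧
        Tendsto (fun ε : ℝ => Pinf α ((x : ℂ) - (ε : ℂ) * I))
          (𝓝[>] 0) (𝓝 Pm) ∧
        Pp = Pm * !![Complex.exp (2 * (α : ℂ) * (Real.pi : ℂ) * I), 0;
                     0, Complex.exp (-(2 * (α : ℂ) * (Real.pi : ℂ) * I))]) ∧
    (∀ x : ℝ, x < -1 →
      ∃ Pp Pm : Matrix (Fin 2) (Fin 2) ℂ,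
        Tendsto (fun ε : ℝ => Pinf α ((x : ℂ) + (ε : ℂ) * I))
          (𝓝[>] 0) (𝓝 Pp) ∧
        Tendsto (fun ε : ℝ => Pinf α ((x : ℂ) - (ε : ℂ) * I))
          (𝓝[>] 0) (𝓝 Pm) ∧
        Pp = Pm * !![0, 1; -1, 0]) :=
  stmt9_general α
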